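/- arXiv:math/9305203 — 2 statements merged into one kernel-verified Lean document; each statement's English description precedes it below -/
import Mathlib

section
/- If g is a Gaussian random vector in R^d with distribution N(0, d^{-1} Id), then for every t > 0, the probability that the Euclidean norm of g is at most t is at most (t·e^{1/2})^d. -/
open MeasureTheory ProbabilityTheory Real NNReal ENNReal

/-! Chernoff's bound for the lower tail of `‖g‖² = ∑ gᵢ²`: for `λ ≥ 0`, independence gives
`P(‖g‖² ≤ t²) ≤ e^{λt²} ∏ E e^{-λ gᵢ²}`, and a Gaussian integral gives
`E e^{-λ gᵢ²} = (1 + 2λ/d)^{-1/2}`. Taking `λ = d / (2t²)` yields the bound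
`e^{d/2} (1 + t⁻²)^{-d/2} ≤ e^{d/2} t^d`. -/

lemma mgf_sq_gaussianReal (v : ℝ≥0) (t : ℝ) :
    mgf (fun x => x ^ 2) (gaussianReal 0 v) t = (√(1 - 2 * v * t))⁻¹ := by
  rcases eq_or_ne v 0 with rfl | hv
  · simp [mgf, gaussianReal_zero_var]
  have hv' : (0 : ℝ) < v := by positivity
  have hdensity (x : ℝ) : gaussianPDFReal 0 v x • exp (t * x ^ 2) =
      (√(2 * π * v))⁻¹ * exp (-((2 * (v : ℝ))⁻¹ - t) * x ^ 2) := by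
    rw [gaussianPDFReal, smul_eq_mul, mul_assoc, ← exp_add]
    congr 2
    ring
  rw [mgf, integral_gaussianReal_eq_integral_smul hv]
  simp_rw [hdensity]
  rw [integral_const_mul, integral_gaussian, ← Real.sqrt_inv, ← sqrt_mul (by positivity),
    ← Real.sqrt_inv]
  congr 1
  have h : (2 * (v : ℝ))⁻¹ - t = (1 - 2 * v * t) / (2 * v) := by field_simp
  rw [h, div_div_eq_mul_div]
  field_simp

section

variable {Ω : Type*} {mΩ : MeasurableSpace Ω} {μ : Measure Ω} {v : ℝ≥0}

lemma mgf_sq_of_map_eq_gaussianReal {X : Ω → ℝ} (hX : μ.map X = gaussianReal 0 v) (t : ℝ) :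
    mgf (fun ω => X ω ^ 2) μ t = (√(1 - 2 * v * t))⁻¹ := by
  have hX_meas : AEMeasurable X μ := aemeasurable_of_map_neZero (by rw [hX]; infer_instance)
  rw [← mgf_sq_gaussianReal, ← hX, mgf_map hX_meas (by fun_prop)]
  rfl

lemma measureReal_norm_le_le_of_iIndepFun_gaussianReal {ι : Type*} [Fintype ι]
    {g : Ω → EuclideanSpace ℝ ι} (hindep : iIndepFun (fun i ω => g ω i) μ)
    (hlaw : ∀ i, μ.map (fun ω => g ω i) = gaussianReal 0 v) (r : ℝ) {b : ℝ} (hb : 0 ≤ b) :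
    μ.real {ω | ‖g ω‖ ≤ r} ≤ exp (b * r ^ 2) * (√(1 + 2 * v * b))⁻¹ ^ Fintype.card ι := by
  have := hindep.isProbabilityMeasure
  set X : ι → Ω → ℝ := fun i ω => g ω i ^ 2
  have hX_meas (i : ι) : AEMeasurable (X i) μ :=
    (aemeasurable_of_map_neZero (by rw [hlaw i]; infer_instance)).pow_const 2
  have hX_indep : iIndepFun X μ := hindep.comp (fun _ x => x ^ 2) (fun _ => by fun_prop)
  have hsubset : {ω | ‖g ω‖ ≤ r} ⊆ {ω | (∑ i, X i) ω ≤ r ^ 2} := by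
    intro ω hω
    have := pow_le_pow_left₀ (norm_nonneg _) hω 2
    simpa [X, EuclideanSpace.norm_sq_eq] using this
  have hint : Integrable (fun ω => exp (-b * (∑ i, X i) ω)) μ := by
    refine (integrable_const 1).mono' (by fun_prop) (ae_of_all _ fun ω => ?_)
    have : 0 ≤ (∑ i, X i) ω := by simp only [Finset.sum_apply]; positivity
    simpa [abs_exp] using mul_nonneg hb this
  calc μ.real {ω | ‖g ω‖ ≤ r}
      ≤ μ.real {ω | (∑ i, X i) ω ≤ r ^ 2} := measureReal_mono hsubset
    _ ≤ exp (b * r ^ 2) * mgf (∑ i, X i) μ (-b) := by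
      simpa using measure_le_le_exp_mul_mgf (r ^ 2) (neg_nonpos.mpr hb) hint
    _ = exp (b * r ^ 2) * (√(1 + 2 * v * b))⁻¹ ^ Fintype.card ι := by
      rw [hX_indep.mgf_sum₀ hX_meas, Finset.prod_congr rfl fun i _ =>
        mgf_sq_of_map_eq_gaussianReal (hlaw i) (-b)]
      simp

end

lemma inv_sqrt_one_add_inv_sq_le {t : ℝ} (ht : 0 < t) : (√(1 + (t ^ 2)⁻¹))⁻¹ ≤ t := by
  calc (√(1 + (t ^ 2)⁻¹))⁻¹ ≤ (√((t ^ 2)⁻¹))⁻¹ := by gcongr; simp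
    _ = t := by rw [Real.sqrt_inv, inv_inv, sqrt_sq ht.le]

theorem gaussian_norm_small_ball_general
    {Ω : Type*} [MeasureSpace Ω]
    (d : ℕ) (g : Ω → EuclideanSpace ℝ (Fin d))
    (hindep : iIndepFun
      (fun (i : Fin d) (ω : Ω) => g ω i) ℙ)
    (hlaw : ∀ i : Fin d, Measure.map (fun ω => g ω i) ℙ = gaussianReal 0 ((d : ℝ≥0))⁻¹)
    (t : ℝ) (ht : 0 < t) :
    ℙ {ω | ‖g ω‖ ≤ t} ≤ ENNReal.ofReal ((t * Real.exp (1 / 2)) ^ d) := by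
  have := hindep.isProbabilityMeasure
  rcases eq_or_ne d 0 with rfl | hd
  · simpa using prob_le_one
  have hchernoff := measureReal_norm_le_le_of_iIndepFun_gaussianReal hindep hlaw t
    (b := d / (2 * t ^ 2)) (by positivity)
  have hvar : 1 + 2 * (((d : ℝ≥0)⁻¹ : ℝ≥0) : ℝ) * (d / (2 * t ^ 2)) = 1 + (t ^ 2)⁻¹ := by
    push_cast
    field_simp
  have hexp : exp (d / (2 * t ^ 2) * t ^ 2) = exp (1 / 2) ^ d := by
    rw [← exp_nat_mul]
    field_simp
  rw [hvar, hexp, Fintype.card_fin, ← mul_pow, mul_comm] at hchernoff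
  rw [← ofReal_measureReal]
  gcongr
  exact hchernoff.trans (by gcongr; exact inv_sqrt_one_add_inv_sq_le ht)

/-- If `g` is a Gaussian random vector in `ℝ^d` with distribution `N(0, d⁻¹ Id)`, then for
every `t > 0`, the probability that `‖g‖₂ ≤ t` is at most `(t * e^(1/2))^d`. -/
theorem gaussian_norm_small_ball
    {Ω : Type*} [MeasureSpace Ω] [IsProbabilityMeasure (ℙ : Measure Ω)]
    (d : ℕ) (hd : 0 < d) (g : Ω → EuclideanSpace ℝ (Fin d))
    (hmeas : Measurable g)
    (hindep : iIndepFun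
      (fun (i : Fin d) (ω : Ω) => g ω i) ℙ)
    (hlaw : ∀ i : Fin d, Measure.map (fun ω => g ω i) ℙ = gaussianReal 0 ((d : ℝ≥0))⁻¹)
    (t : ℝ) (ht : 0 < t) :
    ℙ {ω | ‖g ω‖ ≤ t} ≤ ENNReal.ofReal ((t * Real.exp (1 / 2)) ^ d) :=
  gaussian_norm_small_ball_general d g hindep hlaw t ht
end

section
/- For any operator u between finite-dimensional normed spaces, the k-th Kolmogorov number of the adjoint u* equals the k-th Gelfand number of u: d_k(u*) = c_k(u). -/
/-!
Identify a subspace `Z ⊆ X` with its annihilator `Z^⊥ ⊆ X*`; in finite dimension every subspace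
of `X*` arises this way and `dim Z^⊥ = codim Z`. By Hahn–Banach, the distance from a functional
`f` to `Z^⊥` is the norm of `f|_Z`, so the worst approximation error of `u*` from `Z^⊥` over the
dual unit ball is `sup_{‖g‖ ≤ 1} ‖(g ∘ u)|_Z‖ = ‖(u|_Z)*‖ = ‖u|_Z‖`. Hence the two infima range
over the same set of numbers.
-/

open Module Metric

/-- The `k`-th Gelfand number of an operator `u : X → Y`:
`c_k(u) = inf {‖u|_Z‖ : Z ⊆ X, codim Z < k}`. -/
noncomputable def gelfandNumber {X Y : Type*} [NormedAddCommGroup X] [NormedSpace ℝ X]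
    [NormedAddCommGroup Y] [NormedSpace ℝ Y] (k : ℕ) (u : X →L[ℝ] Y) : ℝ :=
  sInf {r : ℝ | ∃ Z : Submodule ℝ X, Module.finrank ℝ X - Module.finrank ℝ Z < k ∧
    r = ‖u.comp (Z.subtypeL)‖}

/-- The `k`-th Kolmogorov number of an operator `u : X → Y`:
`d_k(u) = inf {sup_{‖x‖ ≤ 1} dist (u x) W : W ⊆ Y, dim W < k}`. -/
noncomputable def kolmogorovNumber {X Y : Type*} [NormedAddCommGroup X] [NormedSpace ℝ X]
    [NormedAddCommGroup Y] [NormedSpace ℝ Y] (k : ℕ) (u : X →L[ℝ] Y) : ℝ :=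
  sInf {r : ℝ | ∃ W : Submodule ℝ Y, Module.finrank ℝ W < k ∧
    r = sSup {s : ℝ | ∃ x : X, ‖x‖ ≤ 1 ∧ s = Metric.infDist (u x) (W : Set Y)}}

namespace Submodule

variable {𝕜 X : Type*} [RCLike 𝕜] [NormedAddCommGroup X] [NormedSpace 𝕜 X]

def strongDualAnnihilator (Z : Submodule 𝕜 X) : Submodule 𝕜 (StrongDual 𝕜 X) :=
  Z.dualAnnihilator.comap (ContinuousLinearMap.coeLM 𝕜)

@[simp]
theorem mem_strongDualAnnihilator {Z : Submodule 𝕜 X} {f : StrongDual 𝕜 X} :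
    f ∈ Z.strongDualAnnihilator ↔ ∀ x ∈ Z, f x = 0 :=
  mem_dualAnnihilator _

theorem infDist_strongDualAnnihilator (Z : Submodule 𝕜 X) (f : StrongDual 𝕜 X) :
    infDist f Z.strongDualAnnihilator = ‖f.comp Z.subtypeL‖ := by
  obtain ⟨g, hgf, hg⟩ := exists_extension_norm_eq Z (f.comp Z.subtypeL)
  refine le_antisymm ?_ ?_
  · have hfg : f - g ∈ Z.strongDualAnnihilator := mem_strongDualAnnihilator.2 fun x hx => by
      simpa [sub_eq_zero] using (hgf ⟨x, hx⟩).symm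
    simpa [dist_eq_norm, hg] using infDist_le_dist_of_mem (x := f) hfg
  · refine (le_infDist ⟨0, zero_mem _⟩).2 fun h hh => ?_
    have : f.comp Z.subtypeL = (f - h).comp Z.subtypeL := by
      ext z
      simp [mem_strongDualAnnihilator.1 hh z z.2]
    rw [this, dist_eq_norm]
    exact ((f - h).opNorm_comp_le _).trans
      (mul_le_of_le_one_right (norm_nonneg _) Z.norm_subtypeL_le)

variable [FiniteDimensional 𝕜 X]

theorem finrank_strongDualAnnihilator (Z : Submodule 𝕜 X) :
    finrank 𝕜 Z.strongDualAnnihilator = finrank 𝕜 X - finrank 𝕜 Z := by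
  have : Z.strongDualAnnihilator =
      Z.dualAnnihilator.map
        (LinearMap.toContinuousLinearMap : Dual 𝕜 X ≃ₗ[𝕜] StrongDual 𝕜 X).toLinearMap := by
    rw [map_equiv_eq_comap_symm]; rfl
  rw [this, LinearEquiv.finrank_map_eq, ← Subspace.finrank_add_finrank_dualAnnihilator_eq Z,
    Nat.add_sub_cancel_left]

theorem exists_strongDualAnnihilator_eq (W : Submodule 𝕜 (StrongDual 𝕜 X)) :
    ∃ Z : Submodule 𝕜 X, Z.strongDualAnnihilator = W := by
  refine ⟨(W.map (ContinuousLinearMap.coeLM 𝕜)).dualCoannihilator, ?_⟩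
  rw [strongDualAnnihilator, Subspace.dualCoannihilator_dualAnnihilator_eq]
  exact comap_map_eq_of_injective ContinuousLinearMap.coe_injective W

end Submodule

namespace ContinuousLinearMap

variable {𝕜 X Y : Type*} [RCLike 𝕜] [NormedAddCommGroup X] [NormedSpace 𝕜 X]
  [NormedAddCommGroup Y] [NormedSpace 𝕜 Y]

theorem norm_compL_flip_apply (u : X →L[𝕜] Y) : ‖(compL 𝕜 X Y 𝕜).flip u‖ = ‖u‖ := by
  refine le_antisymm (opNorm_le_bound _ (norm_nonneg u) fun g => ?_)
    (opNorm_le_bound _ (norm_nonneg _) fun x => ?_)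
  · simpa [mul_comm] using g.opNorm_comp_le u
  · obtain ⟨g, hg, hgx⟩ := exists_dual_vector'' 𝕜 (u x)
    calc ‖u x‖ = ‖g (u x)‖ := by simp [hgx]
      _ ≤ ‖(compL 𝕜 X Y 𝕜).flip u g‖ * ‖x‖ := ((compL 𝕜 X Y 𝕜).flip u g).le_opNorm x
      _ ≤ ‖(compL 𝕜 X Y 𝕜).flip u‖ * ‖x‖ := by
        gcongr; exact ((compL 𝕜 X Y 𝕜).flip u).unit_le_opNorm g hg

theorem sSup_norm_strongDual_comp_eq_norm (u : X →L[𝕜] Y) :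
    sSup {s : ℝ | ∃ g : StrongDual 𝕜 Y, ‖g‖ ≤ 1 ∧ s = ‖g.comp u‖} = ‖u‖ := by
  have : {s : ℝ | ∃ g : StrongDual 𝕜 Y, ‖g‖ ≤ 1 ∧ s = ‖g.comp u‖} =
      (fun g => ‖(compL 𝕜 X Y 𝕜).flip u g‖) '' closedBall 0 1 := by
    ext; simp [eq_comm]
  rw [this, sSup_unitClosedBall_eq_norm, norm_compL_flip_apply]

theorem sSup_infDist_compL_flip_apply_strongDualAnnihilator (u : X →L[𝕜] Y)
    (Z : Submodule 𝕜 X) :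
    sSup {s : ℝ | ∃ g : StrongDual 𝕜 Y, ‖g‖ ≤ 1 ∧
      s = infDist ((compL 𝕜 X Y 𝕜).flip u g) Z.strongDualAnnihilator} =
      ‖u.comp Z.subtypeL‖ := by
  simp_rw [flip_apply, compL_apply, Submodule.infDist_strongDualAnnihilator, comp_assoc]
  exact sSup_norm_strongDual_comp_eq_norm _

end ContinuousLinearMap

theorem kolmogorov_adjoint_eq_gelfand_general {X Y : Type*}
    [NormedAddCommGroup X] [NormedSpace ℝ X] [FiniteDimensional ℝ X]
    [NormedAddCommGroup Y] [NormedSpace ℝ Y]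
    (k : ℕ) (u : X →L[ℝ] Y) :
    kolmogorovNumber k
      (((ContinuousLinearMap.compL ℝ X Y ℝ).flip u :
          StrongDual ℝ Y →L[ℝ] StrongDual ℝ X)) =
      gelfandNumber k u := by
  unfold kolmogorovNumber gelfandNumber
  congr 1
  ext r
  constructor
  · rintro ⟨W, hW, rfl⟩
    obtain ⟨Z, rfl⟩ := Submodule.exists_strongDualAnnihilator_eq W
    rw [Submodule.finrank_strongDualAnnihilator] at hW
    exact ⟨Z, hW, u.sSup_infDist_compL_flip_apply_strongDualAnnihilator Z⟩
  · rintro ⟨Z, hZ, rfl⟩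
    refine ⟨Z.strongDualAnnihilator, ?_,
      (u.sSup_infDist_compL_flip_apply_strongDualAnnihilator Z).symm⟩
    rwa [Submodule.finrank_strongDualAnnihilator]

/-- For an operator `u` between finite-dimensional normed spaces, the `k`-th Kolmogorov
number of the adjoint `u* : Y* → X*` equals the `k`-th Gelfand number of `u`. -/
theorem kolmogorov_adjoint_eq_gelfand {X Y : Type*}
    [NormedAddCommGroup X] [NormedSpace ℝ X] [FiniteDimensional ℝ X]
    [NormedAddCommGroup Y] [NormedSpace ℝ Y] [FiniteDimensional ℝ Y]
    (k : ℕ) (u : X →L[ℝ] Y) :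
    kolmogorovNumber k
      (((ContinuousLinearMap.compL ℝ X Y ℝ).flip u :
          StrongDual ℝ Y →L[ℝ] StrongDual ℝ X)) =
      gelfandNumber k u :=
  kolmogorov_adjoint_eq_gelfand_general k u
end
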